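/- arXiv:0906.4499 — 6 statements merged into one kernel-verified Lean document; each statement's English description precedes it below -/
import Mathlib

section
/- Let ℓ be an ordered generic length vector of length n that is special, meaning: every subset of {1,…,n−1} of cardinality n−2 together with n is long (equivalently no (n−2)-element subset J of {1,…,n−1} has J ∪ {n} short), but there exists an (n−3)-element subset J of {1,…,n−1} with J ∪ {n} short. Then the set of three-element subsets of {1,…,n−1} whose complement in {1,…,n−1}, together with {n}, is short, is totally ordered under the dominance order (J₁ ≤ J₂ iff componentwise inequality of the sorted elements). -/
/-
Write `I = {1,…,n−1}` and `Tᵢ = I \ Jᵢ`. Shortness of `Jᵢ ∪ {n}` reads `ℓₙ + ℓ(Jᵢ) < ℓ(Tᵢ)`;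
adding the two inequalities and using `ℓ(T₁) + ℓ(T₂) ≤ ℓ(I) + ℓ(T₁ ∩ T₂)` gives
`ℓₙ < ℓ(T₁ ∩ T₂)`. As every `ℓᵢ ≤ ℓₙ`, the set `T₁ ∩ T₂` has at least two elements, so the
`(n−4)`-sets `J₁, J₂` differ in at most one element. Finally `B ∪ {u} ≤ B ∪ {v}` whenever
`u < v`: move `u` and the elements of `B` between `u` and `v` one step up.
-/

open Finset

/-- The sum of `ℓ` over `J` is less than the sum over the complement in `{1,…,n}`. -/
def Short (n : ℕ) (ℓ : ℕ → ℝ) (J : Finset ℕ) : Prop :=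
  ∑ j ∈ J, ℓ j < ∑ j ∈ Finset.Icc 1 n \ J, ℓ j

/-- `J` is long iff its complement in `{1,…,n}` is short. -/
def Long (n : ℕ) (ℓ : ℕ → ℝ) (J : Finset ℕ) : Prop :=
  Short n ℓ (Finset.Icc 1 n \ J)

/-- All entries positive. -/
def LengthVec (n : ℕ) (ℓ : ℕ → ℝ) : Prop := ∀ i ∈ Finset.Icc 1 n, 0 < ℓ i

/-- `ℓ₁ ≤ … ≤ ℓₙ`. -/
def OrderedVec (n : ℕ) (ℓ : ℕ → ℝ) : Prop :=
  ∀ i j : ℕ, 1 ≤ i → i ≤ j → j ≤ n → ℓ i ≤ ℓ j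

/-- No subset has sum equal to the sum of its complement. -/
def Generic (n : ℕ) (ℓ : ℕ → ℝ) : Prop :=
  ∀ J ⊆ Finset.Icc 1 n, ∑ j ∈ J, ℓ j ≠ ∑ j ∈ Finset.Icc 1 n \ J, ℓ j

/-- Dominance order: an injective order-preserving map `φ : J₁ → J₂` with `x ≤ φ x`. -/
def DomLe (J₁ J₂ : Finset ℕ) : Prop :=
  ∃ φ : ℕ → ℕ, Set.InjOn φ ↑J₁ ∧ (∀ x ∈ J₁, φ x ∈ J₂) ∧
    (∀ x ∈ J₁, ∀ y ∈ J₁, x < y → φ x < φ y) ∧ ∀ x ∈ J₁, x ≤ φ x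

/-- `Ṡ_k(ℓ)`: subsets `J ⊆ {1,…,n−1}` of cardinality `k` with `J ∪ {n}` short. -/
def SdotSet (n : ℕ) (ℓ : ℕ → ℝ) (k : ℕ) : Set (Finset ℕ) :=
  {J | J ⊆ Finset.Icc 1 (n-1) ∧ J.card = k ∧ Short n ℓ (insert n J)}

/-- `Ṡ(ℓ)`: subsets `J ⊆ {1,…,n−1}` with `J ∪ {n}` short. -/
def Sdot (n : ℕ) (ℓ : ℕ → ℝ) : Set (Finset ℕ) :=
  {J | J ⊆ Finset.Icc 1 (n-1) ∧ Short n ℓ (insert n J)}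

/-- Special: `Ṡ_{n−3}(ℓ) = ∅ ≠ Ṡ_{n−4}(ℓ)`. -/
def SpecialVec (n : ℕ) (ℓ : ℕ → ℝ) : Prop :=
  SdotSet n ℓ (n-3) = ∅ ∧ SdotSet n ℓ (n-4) ≠ ∅

/-- `T` is the type of `ℓ`: the minimal three-element long subset of `{1,…,n−1}`. -/
def IsType (n : ℕ) (ℓ : ℕ → ℝ) (T : Finset ℕ) : Prop :=
  T ⊆ Finset.Icc 1 (n-1) ∧ T.card = 3 ∧ Long n ℓ T ∧
    ∀ T' ⊆ Finset.Icc 1 (n-1), T'.card = 3 → Long n ℓ T' → DomLe T T'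

lemma domLe_of_strictMonoOn {J₁ J₂ : Finset ℕ} (φ : ℕ → ℕ) (hmono : StrictMonoOn φ J₁)
    (hmaps : Set.MapsTo φ J₁ J₂) (hle : ∀ x ∈ J₁, x ≤ φ x) : DomLe J₁ J₂ :=
  ⟨φ, hmono.injOn, hmaps, fun _ hx _ hy hxy => hmono hx hy hxy, hle⟩

lemma domLe_refl (J : Finset ℕ) : DomLe J J :=
  domLe_of_strictMonoOn id (strictMono_id.strictMonoOn _) (Set.mapsTo_id _) fun _ _ => le_rfl

section Shift

variable {B : Finset ℕ} {u v : ℕ}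

def shiftToward (B : Finset ℕ) (u v z : ℕ) : ℕ :=
  if z ∈ Ico u v then (insert v (B.filter (z < ·))).min' (insert_nonempty _ _) else z

lemma shiftToward_of_notMem {z : ℕ} (hz : z ∉ Ico u v) : shiftToward B u v z = z :=
  if_neg hz

lemma shiftToward_spec {z : ℕ} (hz : z ∈ Ico u v) :
    shiftToward B u v z ∈ insert v B ∧ z < shiftToward B u v z ∧
      ∀ w ∈ insert v B, z < w → shiftToward B u v z ≤ w := by
  have hv : z < v := (mem_Ico.1 hz).2
  have hS : ∀ w ∈ insert v (B.filter (z < ·)), w ∈ insert v B ∧ z < w := by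
    simp only [mem_insert, mem_filter]
    rintro w (rfl | ⟨hw, hzw⟩)
    · exact ⟨Or.inl rfl, hv⟩
    · exact ⟨Or.inr hw, hzw⟩
  rw [shiftToward, if_pos hz]
  refine ⟨(hS _ (min'_mem _ _)).1, (hS _ (min'_mem _ _)).2, fun w hw hzw => min'_le _ _ ?_⟩
  simp only [mem_insert, mem_filter] at hw ⊢
  exact hw.imp_right fun hw => ⟨hw, hzw⟩

lemma le_shiftToward (z : ℕ) : z ≤ shiftToward B u v z := by
  by_cases hz : z ∈ Ico u v
  · exact (shiftToward_spec hz).2.1.le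
  · exact (shiftToward_of_notMem hz).ge

lemma domLe_insert_insert (hu : u ∉ B) (hv : v ∉ B) (huv : u < v) :
    DomLe (insert u B) (insert v B) := by
  refine domLe_of_strictMonoOn (shiftToward B u v) ?_ ?_ fun z _ => le_shiftToward z
  · intro x hx y hy hxy
    by_cases hxw : x ∈ Ico u v
    · obtain ⟨-, -, hleast⟩ := shiftToward_spec (B := B) hxw
      have hyB : y ∈ B := (mem_insert.1 hy).resolve_left (by grind)
      by_cases hyw : y ∈ Ico u v
      · exact (hleast y (mem_insert_of_mem hyB) hxy).trans_lt (shiftToward_spec hyw).2.1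
      · have hvy : v < y := by grind
        rw [shiftToward_of_notMem hyw]
        exact (hleast v (mem_insert_self _ _) (mem_Ico.1 hxw).2).trans_lt hvy
    · rw [shiftToward_of_notMem hxw]
      exact hxy.trans_le (le_shiftToward y)
  · intro x hx
    by_cases hxw : x ∈ Ico u v
    · exact (shiftToward_spec hxw).1
    · rw [shiftToward_of_notMem hxw]
      rcases mem_insert.1 hx with rfl | hxB
      · exact absurd (mem_Ico.2 ⟨le_rfl, huv⟩) hxw
      · exact mem_insert_of_mem hxB

end Shift

lemma domLe_or_domLe_of_card_sdiff_le_one {J₁ J₂ : Finset ℕ} (hcard : #J₁ = #J₂)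
    (hdiff : #(J₂ \ J₁) ≤ 1) : DomLe J₁ J₂ ∨ DomLe J₂ J₁ := by
  have hsymm : #(J₁ \ J₂) = #(J₂ \ J₁) := card_sdiff_comm hcard
  rcases Nat.le_one_iff_eq_zero_or_eq_one.1 hdiff with h0 | h1
  · have hJ : J₁ = J₂ :=
      Subset.antisymm (sdiff_eq_empty_iff_subset.1 (card_eq_zero.1 (hsymm.trans h0)))
        (sdiff_eq_empty_iff_subset.1 (card_eq_zero.1 h0))
    exact Or.inl (hJ ▸ domLe_refl J₁)
  set B := J₁ ∩ J₂ with hB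
  obtain ⟨u, hu⟩ := card_eq_one.1 (hsymm.trans h1)
  obtain ⟨v, hv⟩ := card_eq_one.1 h1
  have hu' : u ∈ J₁ ∧ u ∉ J₂ := mem_sdiff.1 (hu ▸ mem_singleton_self u)
  have hv' : v ∈ J₂ ∧ v ∉ J₁ := mem_sdiff.1 (hv ▸ mem_singleton_self v)
  have hJ₁ : J₁ = insert u B := by rw [insert_eq, ← hu, sdiff_union_inter]
  have hJ₂ : J₂ = insert v B := by rw [insert_eq, ← hv, hB, inter_comm, sdiff_union_inter]
  have huB : u ∉ B := fun h => hu'.2 (mem_inter.1 h).2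
  have hvB : v ∉ B := fun h => hv'.2 (mem_inter.1 h).1
  rw [hJ₁, hJ₂]
  rcases lt_or_gt_of_ne (fun h : u = v => hu'.2 (h ▸ hv'.1)) with huv | hvu
  · exact Or.inl (domLe_insert_insert huB hvB huv)
  · exact Or.inr (domLe_insert_insert hvB huB hvu)

lemma lt_sum_sdiff_union {ι : Type*} [DecidableEq ι] {I J₁ J₂ : Finset ι} {f : ι → ℝ} {c : ℝ}
    (hf : ∀ i ∈ I, 0 ≤ f i) (hJ₁ : J₁ ⊆ I) (hJ₂ : J₂ ⊆ I)
    (h₁ : c + ∑ i ∈ J₁, f i < ∑ i ∈ I \ J₁, f i) (h₂ : c + ∑ i ∈ J₂, f i < ∑ i ∈ I \ J₂, f i) :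
    c < ∑ i ∈ I \ (J₁ ∪ J₂), f i := by
  have e₁ := sum_sdiff hJ₁ (f := f)
  have e₂ := sum_sdiff hJ₂ (f := f)
  have hunion := sum_union_inter (s₁ := I \ J₁) (s₂ := I \ J₂) (f := f)
  have hle : ∑ i ∈ I \ J₁ ∪ I \ J₂, f i ≤ ∑ i ∈ I, f i :=
    sum_le_sum_of_subset_of_nonneg (union_subset sdiff_subset sdiff_subset) fun i hi _ => hf i hi
  rw [sdiff_union_distrib]
  linarith

lemma one_lt_card_of_lt_sum {ι : Type*} {S : Finset ι} {f : ι → ℝ} {c : ℝ} (hc : 0 ≤ c)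
    (hf : ∀ i ∈ S, f i ≤ c) (h : c < ∑ i ∈ S, f i) : 1 < #S := by
  have hsum : ∑ i ∈ S, f i ≤ #S * c := by simpa using sum_le_card_nsmul S f c hf
  by_contra! hS
  have : (#S : ℝ) * c ≤ c := mul_le_of_le_one_left hc (by exact_mod_cast hS)
  linarith

lemma Icc_sdiff_insert_self (n : ℕ) (J : Finset ℕ) :
    Icc 1 n \ insert n J = Icc 1 (n - 1) \ J := by
  ext z
  simp only [mem_sdiff, mem_Icc, mem_insert]
  grind

lemma add_sum_lt_sum_sdiff_of_short_insert {n : ℕ} {ℓ : ℕ → ℝ} {J : Finset ℕ}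
    (hJ : J ⊆ Icc 1 (n - 1)) (h : Short n ℓ (insert n J)) :
    ℓ n + ∑ j ∈ J, ℓ j < ∑ j ∈ Icc 1 (n - 1) \ J, ℓ j := by
  have hnJ : n ∉ J := fun hn => by have := mem_Icc.1 (hJ hn); omega
  rwa [Short, Icc_sdiff_insert_self, sum_insert hnJ] at h

theorem sdot_totally_ordered_general (n : ℕ) (ℓ : ℕ → ℝ) (hn : 5 ≤ n)
    (hpos : LengthVec n ℓ) (hord : OrderedVec n ℓ) :
    ∀ J₁ ∈ SdotSet n ℓ (n-4), ∀ J₂ ∈ SdotSet n ℓ (n-4),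
      DomLe J₁ J₂ ∨ DomLe J₂ J₁ := by
  rintro J₁ ⟨hJ₁, hc₁, hs₁⟩ J₂ ⟨hJ₂, hc₂, hs₂⟩
  set I := Icc 1 (n - 1)
  have hI : ∀ i ∈ I, 0 < ℓ i ∧ ℓ i ≤ ℓ n := fun i hi => by
    obtain ⟨h1, h2⟩ := mem_Icc.1 hi
    exact ⟨hpos i (mem_Icc.2 ⟨h1, by omega⟩), hord i n h1 (by omega) le_rfl⟩
  have hfree : 1 < #(I \ (J₁ ∪ J₂)) :=
    one_lt_card_of_lt_sum (hpos n (mem_Icc.2 ⟨by omega, le_rfl⟩)).le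
      (fun i hi => (hI i (mem_sdiff.1 hi).1).2)
      (lt_sum_sdiff_union (fun i hi => (hI i hi).1.le) hJ₁ hJ₂
        (add_sum_lt_sum_sdiff_of_short_insert hJ₁ hs₁)
        (add_sum_lt_sum_sdiff_of_short_insert hJ₂ hs₂))
  have hcardI : #(I \ (J₁ ∪ J₂)) + #(J₁ ∪ J₂) = n - 1 := by
    rw [card_sdiff_add_card_eq_card (union_subset hJ₁ hJ₂), Nat.card_Icc]; omega
  have hunion : #(J₂ \ J₁) + #J₁ = #(J₁ ∪ J₂) := by rw [card_sdiff_add_card, union_comm]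
  exact domLe_or_domLe_of_card_sdiff_le_one (hc₁.trans hc₂.symm) (by omega)

/-- For an ordered special length vector, Ṡ_{n−4}(ℓ) is totally
ordered under the dominance order. -/
theorem sdot_totally_ordered (n : ℕ) (ℓ : ℕ → ℝ) (hn : 5 ≤ n)
    (hpos : LengthVec n ℓ) (hord : OrderedVec n ℓ) (hgen : Generic n ℓ)
    (hspec : SpecialVec n ℓ) :
    ∀ J₁ ∈ SdotSet n ℓ (n-4), ∀ J₂ ∈ SdotSet n ℓ (n-4),
      DomLe J₁ J₂ ∨ DomLe J₂ J₁ :=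
  sdot_totally_ordered_general n ℓ hn hpos hord
end

section
/- Let ℓ be an ordered special length vector of length n. Then {n−5, n−3, n−1} is not long with respect to ℓ. -/
open Finset

/-
For an ordered positive length vector, a set `J` that is dominated by some part `K` of its
complement weighs at most `K`, hence at most its complement, so `J` is not long. Shifting every
index up by one exhibits `{n-5, n-3, n-1}` as dominated by `{n-4, n-2, n}`, which is disjoint
from it.
-/

section Dominance

variable {n : ℕ} {ℓ : ℕ → ℝ} {J K : Finset ℕ}

theorem long_iff_sum_lt (hJ : J ⊆ Icc 1 n) :
    Long n ℓ J ↔ ∑ j ∈ Icc 1 n \ J, ℓ j < ∑ j ∈ J, ℓ j := by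
  rw [Long, Short, Finset.sdiff_sdiff_eq_self hJ]

theorem sum_le_sum_of_domLe (hpos : LengthVec n ℓ) (hord : OrderedVec n ℓ)
    (hJ : J ⊆ Icc 1 n) (hK : K ⊆ Icc 1 n) (h : DomLe J K) :
    ∑ j ∈ J, ℓ j ≤ ∑ k ∈ K, ℓ k := by
  obtain ⟨φ, hinj, hmaps, -, hle⟩ := h
  have hφn : ∀ j ∈ J, φ j ≤ n := fun j hj => (mem_Icc.1 (hK (hmaps j hj))).2
  calc ∑ j ∈ J, ℓ j
      ≤ ∑ j ∈ J, ℓ (φ j) := sum_le_sum fun j hj =>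
        hord _ _ (mem_Icc.1 (hJ hj)).1 (hle j hj) (hφn j hj)
    _ = ∑ k ∈ J.image φ, ℓ k := (sum_image hinj).symm
    _ ≤ ∑ k ∈ K, ℓ k := sum_le_sum_of_subset_of_nonneg (image_subset_iff.2 hmaps)
        fun k hk _ => (hpos k (hK hk)).le

theorem not_long_of_domLe_sdiff (hpos : LengthVec n ℓ) (hord : OrderedVec n ℓ)
    (hJ : J ⊆ Icc 1 n) (hK : K ⊆ Icc 1 n \ J) (h : DomLe J K) : ¬ Long n ℓ J := by
  rw [long_iff_sum_lt hJ, not_lt]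
  calc ∑ j ∈ J, ℓ j
      ≤ ∑ k ∈ K, ℓ k := sum_le_sum_of_domLe hpos hord hJ (hK.trans sdiff_subset) h
    _ ≤ ∑ k ∈ Icc 1 n \ J, ℓ k := sum_le_sum_of_subset_of_nonneg hK
        fun k hk _ => (hpos k (mem_sdiff.1 hk).1).le

theorem domLe_of_add_one_mem (h : ∀ x ∈ J, x + 1 ∈ K) : DomLe J K :=
  ⟨(· + 1), fun _ _ _ _ hxy => Nat.succ_injective hxy, h,
    fun _ _ _ _ hxy => Nat.succ_lt_succ hxy, fun _ _ => Nat.le_succ _⟩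

end Dominance

theorem not_long_n5n3n1_general (n : ℕ) (ℓ : ℕ → ℝ) (hn : 6 ≤ n)
    (hpos : LengthVec n ℓ) (hord : OrderedVec n ℓ) :
    ¬ Long n ℓ {n-5, n-3, n-1} := by
  refine not_long_of_domLe_sdiff (K := {n-4, n-2, n}) hpos hord ?_ ?_ ?_
  · intro x hx
    simp only [mem_insert, mem_singleton] at hx
    simp only [mem_Icc]
    omega
  · intro x hx
    simp only [mem_insert, mem_singleton] at hx
    simp only [mem_sdiff, mem_Icc, mem_insert, mem_singleton]
    omega
  · refine domLe_of_add_one_mem fun x hx => ?_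
    simp only [mem_insert, mem_singleton] at hx ⊢
    omega

/-- For an ordered special length vector, {n−5,n−3,n−1} is not long. -/
theorem not_long_n5n3n1 (n : ℕ) (ℓ : ℕ → ℝ) (hn : 6 ≤ n)
    (hpos : LengthVec n ℓ) (hord : OrderedVec n ℓ) (hgen : Generic n ℓ)
    (hspec : SpecialVec n ℓ) :
    ¬ Long n ℓ {n-5, n-3, n-1} :=
  not_long_n5n3n1_general n ℓ hn hpos hord
end

section
/- Let ℓ be an ordered special length vector of length n. Then the type of ℓ (the minimal three-element long subset of {1,…,n−1}) is one of: {n−3,n−2,n−1}, {i,n−2,n−1} for some 1 ≤ i ≤ n−4, {n−4,n−3,n−1}, or {n−4,n−3,n−2}. -/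
/-!
A long set must outweigh every set disjoint from it. If `a < b < c < n` and `{1,…,n}` contains
`x < y < n` outside `{a, b, c}` with `a ≤ x` and `b ≤ y`, then for an ordered length vector
`ℓ a + ℓ b + ℓ c ≤ ℓ x + ℓ y + ℓ n`, so `{a, b, c}` is not long. Such `x, y` can be chosen near the
top of `{1,…,n−1}` unless `{a, b, c}` is one of the four listed shapes.
-/

open Finset

theorem Finset.exists_lt_lt_eq_of_card_eq_three {α : Type*} [LinearOrder α] {s : Finset α}
    (h : s.card = 3) : ∃ a b c, a < b ∧ b < c ∧ s = {a, b, c} := by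
  set f := s.orderEmbOfFin h
  refine ⟨f 0, f 1, f 2, f.strictMono (by decide), f.strictMono (by decide), ?_⟩
  rw [← coe_inj, ← s.range_orderEmbOfFin h]
  ext x
  simp [Fin.exists_fin_succ, eq_comm, -range_orderEmbOfFin]
  rfl

theorem Long.sum_lt_of_subset_sdiff {n : ℕ} {ℓ : ℕ → ℝ} {J K : Finset ℕ} (hpos : LengthVec n ℓ)
    (hJ : J ⊆ Icc 1 n) (hlong : Long n ℓ J) (hK : K ⊆ Icc 1 n \ J) :
    ∑ j ∈ K, ℓ j < ∑ j ∈ J, ℓ j := by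
  unfold Long Short at hlong
  rw [Finset.sdiff_sdiff_eq_self hJ] at hlong
  calc ∑ j ∈ K, ℓ j ≤ ∑ j ∈ Icc 1 n \ J, ℓ j :=
        sum_le_sum_of_subset_of_nonneg hK fun i hi _ => (hpos i (mem_sdiff.1 hi).1).le
    _ < ∑ j ∈ J, ℓ j := hlong

theorem not_long_of_dominated {n : ℕ} {ℓ : ℕ → ℝ} (hpos : LengthVec n ℓ) (hord : OrderedVec n ℓ)
    {a b c x y : ℕ} (ha : 1 ≤ a) (hab : a < b) (hbc : b < c) (hcn : c < n)
    (hax : a ≤ x) (hby : b ≤ y) (hxy : x < y) (hyn : y < n)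
    (hx : x ∉ ({a, b, c} : Finset ℕ)) (hy : y ∉ ({a, b, c} : Finset ℕ)) :
    ¬ Long n ℓ {a, b, c} := by
  intro hlong
  simp only [mem_insert, mem_singleton] at hx hy
  have hsub : ({a, b, c} : Finset ℕ) ⊆ Icc 1 n := by
    intro t
    simp only [mem_insert, mem_singleton, mem_Icc]
    omega
  have hdisj : ({x, y, n} : Finset ℕ) ⊆ Icc 1 n \ {a, b, c} := by
    intro t
    simp only [mem_insert, mem_singleton, mem_sdiff, mem_Icc]
    omega
  have hsum := hlong.sum_lt_of_subset_sdiff hpos hsub hdisj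
  rw [sum_insert (by simp only [mem_insert, mem_singleton]; omega), sum_pair (by omega),
    sum_insert (by simp only [mem_insert, mem_singleton]; omega), sum_pair (by omega)] at hsum
  have := hord a x ha hax (by omega)
  have := hord b y (by omega) hby (by omega)
  have := hord c n (by omega) hcn.le le_rfl
  linarith

theorem eq_special_type_or_exists_dominating {n a b c : ℕ} (ha : 1 ≤ a) (hab : a < b)
    (hbc : b < c) (hcn : c < n) :
    (({a, b, c} : Finset ℕ) = {n-3, n-2, n-1} ∨
      (∃ i : ℕ, 1 ≤ i ∧ i ≤ n-4 ∧ ({a, b, c} : Finset ℕ) = {i, n-2, n-1}) ∨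
      ({a, b, c} : Finset ℕ) = {n-4, n-3, n-1} ∨
      ({a, b, c} : Finset ℕ) = {n-4, n-3, n-2}) ∨
    ∃ x y, a ≤ x ∧ b ≤ y ∧ x < y ∧ y < n ∧
      x ∉ ({a, b, c} : Finset ℕ) ∧ y ∉ ({a, b, c} : Finset ℕ) := by
  obtain h | h | h | h | h | h | h | h :
      c ≤ n - 3 ∨ (c = n - 2 ∧ b ≤ n - 4) ∨ (c = n - 2 ∧ b = n - 3 ∧ a ≤ n - 5) ∨
      (c = n - 2 ∧ b = n - 3 ∧ a = n - 4) ∨ (c = n - 1 ∧ b ≤ n - 4) ∨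
      (c = n - 1 ∧ b = n - 3 ∧ a ≤ n - 5) ∨ (c = n - 1 ∧ b = n - 3 ∧ a = n - 4) ∨
      (c = n - 1 ∧ b = n - 2) := by omega
  · exact Or.inr ⟨n - 2, n - 1, by simp only [mem_insert, mem_singleton]; omega⟩
  · exact Or.inr ⟨n - 3, n - 1, by simp only [mem_insert, mem_singleton]; omega⟩
  · exact Or.inr ⟨a + 1, n - 1, by simp only [mem_insert, mem_singleton]; omega⟩
  · obtain ⟨rfl, rfl, rfl⟩ := h
    exact Or.inl <| Or.inr <| Or.inr <| Or.inr rfl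
  · exact Or.inr ⟨n - 3, n - 2, by simp only [mem_insert, mem_singleton]; omega⟩
  · exact Or.inr ⟨a + 1, n - 2, by simp only [mem_insert, mem_singleton]; omega⟩
  · obtain ⟨rfl, rfl, rfl⟩ := h
    exact Or.inl <| Or.inr <| Or.inr <| Or.inl rfl
  · obtain ⟨rfl, rfl⟩ := h
    obtain rfl | ha' := eq_or_ne a (n - 3)
    · exact Or.inl <| Or.inl rfl
    · exact Or.inl <| Or.inr <| Or.inl ⟨a, ha, by omega, rfl⟩

theorem type_classification_general (n : ℕ) (ℓ : ℕ → ℝ)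
    (hpos : LengthVec n ℓ) (hord : OrderedVec n ℓ) (T : Finset ℕ) (hT : IsType n ℓ T) :
    T = {n-3, n-2, n-1} ∨
    (∃ i : ℕ, 1 ≤ i ∧ i ≤ n-4 ∧ T = {i, n-2, n-1}) ∨
    T = {n-4, n-3, n-1} ∨
    T = {n-4, n-3, n-2} := by
  obtain ⟨hTsub, hTcard, hTlong, -⟩ := hT
  obtain ⟨a, b, c, hab, hbc, rfl⟩ := exists_lt_lt_eq_of_card_eq_three hTcard
  have ha := mem_Icc.1 (hTsub (by simp : a ∈ ({a, b, c} : Finset ℕ)))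
  have hc := mem_Icc.1 (hTsub (by simp : c ∈ ({a, b, c} : Finset ℕ)))
  refine (eq_special_type_or_exists_dominating ha.1 hab hbc (by omega)).resolve_right ?_
  rintro ⟨x, y, hax, hby, hxy, hyn, hx, hy⟩
  exact not_long_of_dominated hpos hord ha.1 hab hbc (by omega) hax hby hxy hyn hx hy hTlong

/-- The type of an ordered special length vector is one of
{n−3,n−2,n−1}, {i,n−2,n−1} (1 ≤ i ≤ n−4), {n−4,n−3,n−1}, {n−4,n−3,n−2}. -/
theorem type_classification (n : ℕ) (ℓ : ℕ → ℝ) (hn : 5 ≤ n)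
    (hpos : LengthVec n ℓ) (hord : OrderedVec n ℓ) (hgen : Generic n ℓ)
    (hspec : SpecialVec n ℓ) (T : Finset ℕ) (hT : IsType n ℓ T) :
    T = {n-3, n-2, n-1} ∨
    (∃ i : ℕ, 1 ≤ i ∧ i ≤ n-4 ∧ T = {i, n-2, n-1}) ∨
    T = {n-4, n-3, n-1} ∨
    T = {n-4, n-3, n-2} :=
  type_classification_general n ℓ hpos hord T hT
end

section
/- Let ℓ be an ordered special length vector of type {n−4,n−3,n−2} with n ≥ 5. Then |Ṡ_1(ℓ)| = n−1, |Ṡ_2(ℓ)| = C(n−5,2) + 4(n−5), |Ṡ_{n−5}(ℓ)| = 4(n−5)+1, and |Ṡ_{n−4}(ℓ)| = 4. -/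
open Finset

/-! With `A = {1,…,n-5}` and `Q = {n-4,…,n-1}`, a set `J ⊆ {1,…,n-1}` lies in `Ṡ(ℓ)` exactly
when it meets `Q` in at most one element. Put `M = ℓ(A) + ℓ(n-1) + ℓ(n)`; that the type is long
says `2M` is less than the total length. If `|J ∩ Q| ≤ 1` then `ℓ(n) + ℓ(J) ≤ M`, so `J ∪ {n}` is
short. Otherwise the complement of `J` in `{1,…,n-1}` meets `Q` in at most two elements, so its
length is at most `ℓ(A) + ℓ(n-2) + ℓ(n-1) ≤ M`, and `J ∪ {n}` is long. It remains to count the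
`k`-subsets of `A ∪ Q` meeting `Q` at most once: there are `C(n-5,k) + 4·C(n-5,k-1)` of them. -/

theorem sum_le_sum_add_sum_inter {ι M : Type*} [DecidableEq ι] [AddCommMonoid M] [PartialOrder M]
    [IsOrderedAddMonoid M] {f : ι → M} {B Q S : Finset ι} (hB : ∀ i ∈ B, 0 ≤ f i)
    (hS : S ⊆ B ∪ Q) : ∑ i ∈ S, f i ≤ ∑ i ∈ B, f i + ∑ i ∈ S ∩ Q, f i := by
  rw [← sum_inter_add_sum_sdiff S Q, add_comm]
  refine add_le_add_left (sum_le_sum_of_subset_of_nonneg (fun i hi => ?_) fun i hi _ => hB i hi) _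
  obtain ⟨hiS, hiQ⟩ := mem_sdiff.1 hi
  exact (mem_union.1 (hS hiS)).resolve_right hiQ

section
variable {n : ℕ} {ℓ : ℕ → ℝ}

theorem sum_le_sum_range_of_card_le (hpos : LengthVec n ℓ) (hord : OrderedVec n ℓ)
    {S : Finset ℕ} {k m : ℕ} (hS : S ⊆ Icc 1 m) (hm : m ≤ n) (hSk : #S ≤ k) (hkm : k ≤ m) :
    ∑ j ∈ S, ℓ j ≤ ∑ i ∈ range k, ℓ (m - i) := by
  induction S using Finset.induction_on_max generalizing k m with
  | empty => exact sum_nonneg fun i hi => (hpos _ (by simp at hi ⊢; omega)).le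
  | insert a S haS ih =>
    have haS' : a ∉ S := fun h => lt_irrefl a (haS a h)
    have ha := mem_Icc.1 (hS (mem_insert_self a S))
    rw [card_insert_of_notMem haS'] at hSk
    obtain ⟨k, rfl⟩ : ∃ k', k = k' + 1 := ⟨k - 1, by omega⟩
    have hS' : S ⊆ Icc 1 (m - 1) := fun x hx => by
      have := mem_Icc.1 (hS (mem_insert_of_mem hx)); have := haS x hx
      exact mem_Icc.2 ⟨by omega, by omega⟩
    have hrest := ih (k := k) hS' (by omega) (by omega) (by omega)
    have htop : ℓ a ≤ ℓ m := hord a m ha.1 ha.2 hm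
    rw [sum_insert haS', sum_range_succ', Nat.sub_zero, add_comm]
    simp_rw [Nat.sub_add_eq, Nat.sub_right_comm m _ 1]
    exact add_le_add hrest htop

theorem short_insert_iff (hn : 1 ≤ n) {J : Finset ℕ} (hJ : J ⊆ Icc 1 (n - 1)) :
    Short n ℓ (insert n J) ↔ 2 * (ℓ n + ∑ j ∈ J, ℓ j) < ∑ j ∈ Icc 1 n, ℓ j := by
  have hnJ : n ∉ J := fun h => by have := mem_Icc.1 (hJ h); omega
  have hsub : insert n J ⊆ Icc 1 n :=
    insert_subset_iff.2 ⟨mem_Icc.2 ⟨hn, le_rfl⟩, hJ.trans (Icc_subset_Icc_right (by omega))⟩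
  rw [Short, sum_sdiff_eq_sub hsub, sum_insert hnJ]
  constructor <;> intro <;> linarith

theorem sum_Icc_one_eq_add_sum_sdiff (hn : 1 ≤ n) {J : Finset ℕ} (hJ : J ⊆ Icc 1 (n - 1)) :
    ∑ j ∈ Icc 1 n, ℓ j = ℓ n + ∑ j ∈ J, ℓ j + ∑ j ∈ Icc 1 (n - 1) \ J, ℓ j := by
  have hIcc : Icc 1 n = insert n (Icc 1 (n - 1)) := by ext; simp; omega
  rw [hIcc, sum_insert (by simp; omega), ← sum_sdiff hJ]
  ring

theorem short_insert_compl_of_long (hn : 5 ≤ n) (hlong : Long n ℓ {n - 4, n - 3, n - 2}) :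
    Short n ℓ (insert n (insert (n - 1) (Icc 1 (n - 5)))) := by
  have hcompl : Icc 1 n \ {n - 4, n - 3, n - 2} = insert n (insert (n - 1) (Icc 1 (n - 5))) := by
    ext; simp; omega
  rwa [Long, hcompl] at hlong

theorem Icc_one_pred_eq_union (hn : 5 ≤ n) :
    Icc 1 (n - 1) = Icc 1 (n - 5) ∪ Icc (n - 4) (n - 1) := by
  ext; simp; omega

theorem short_insert_iff_card_inter_le_one (hn : 5 ≤ n) (hpos : LengthVec n ℓ)
    (hord : OrderedVec n ℓ) (hlong : Long n ℓ {n - 4, n - 3, n - 2}) {J : Finset ℕ}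
    (hJ : J ⊆ Icc 1 (n - 1)) :
    Short n ℓ (insert n J) ↔ #(J ∩ Icc (n - 4) (n - 1)) ≤ 1 := by
  have hlow : ∀ i ∈ Icc 1 (n - 5), 0 ≤ ℓ i := fun i hi =>
    (hpos i (Icc_subset_Icc_right (by omega) hi)).le
  have htop : ∀ S ⊆ Icc 1 (n - 1), ∀ k ≤ 4, #(S ∩ Icc (n - 4) (n - 1)) ≤ k →
      ∑ j ∈ S, ℓ j ≤ ∑ j ∈ Icc 1 (n - 5), ℓ j + ∑ i ∈ range k, ℓ (n - 1 - i) :=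
    fun S hS k hk hSk =>
    (sum_le_sum_add_sum_inter hlow (Icc_one_pred_eq_union hn ▸ hS)).trans <| add_le_add_right
      (sum_le_sum_range_of_card_le hpos hord (inter_subset_right.trans
        (Icc_subset_Icc_left (by omega))) (by omega) hSk (by omega)) _
  have hM := (short_insert_iff (by omega) (insert_subset_iff.2 ⟨by simp; omega,
    Icc_subset_Icc_right (by omega)⟩)).1 (short_insert_compl_of_long hn hlong)
  rw [sum_insert (by simp; omega)] at hM
  rw [short_insert_iff (by omega) hJ]
  constructor
  · intro hshort
    by_contra! hJQ
    have hKQ : #((Icc 1 (n - 1) \ J) ∩ Icc (n - 4) (n - 1)) ≤ 2 := by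
      rw [sdiff_inter_right_comm, inter_eq_right.2 (Icc_subset_Icc_left (by omega)), card_sdiff]
      simp; omega
    have hK := htop _ sdiff_subset 2 (by norm_num) hKQ
    have hnn : ℓ (n - 2) ≤ ℓ n := hord _ _ (by omega) (by omega) le_rfl
    rw [sum_range_succ, sum_range_one, Nat.sub_zero, show n - 1 - 1 = n - 2 by omega] at hK
    linarith [sum_Icc_one_eq_add_sum_sdiff (ℓ := ℓ) (by omega) hJ]
  · intro hJQ
    have hJ' := htop J hJ 1 (by norm_num) hJQ
    rw [sum_range_one, Nat.sub_zero] at hJ'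
    linarith

end

section
variable {α : Type*} [DecidableEq α] {A Q : Finset α}

theorem filter_card_inter_eq_zero_powersetCard_union (h : Disjoint A Q) (m : ℕ) :
    {J ∈ powersetCard m (A ∪ Q) | #(J ∩ Q) = 0} = powersetCard m A := by
  ext J
  simp only [mem_filter, mem_powersetCard, card_eq_zero, ← disjoint_iff_inter_eq_empty]
  constructor
  · rintro ⟨⟨hJ, hcard⟩, hJQ⟩
    exact ⟨fun x hx => (mem_union.1 (hJ hx)).resolve_right (disjoint_left.1 hJQ hx), hcard⟩
  · rintro ⟨hJ, hcard⟩
    exact ⟨⟨hJ.trans subset_union_left, hcard⟩, h.mono_left hJ⟩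

theorem insert_inter_eq_singleton_and_insert_sdiff_eq (h : Disjoint A Q) {q : α} {B : Finset α}
    (hq : q ∈ Q) (hB : B ⊆ A) : insert q B ∩ Q = {q} ∧ insert q B \ Q = B := by
  have hBQ : Disjoint B Q := h.mono_left hB
  rw [insert_inter_of_mem hq, disjoint_iff_inter_eq_empty.1 hBQ, insert_sdiff_of_mem _ hq,
    sdiff_eq_self_of_disjoint hBQ]
  exact ⟨rfl, rfl⟩

theorem card_filter_card_inter_eq_one_powersetCard_union (h : Disjoint A Q) (k : ℕ) :
    #{J ∈ powersetCard (k + 1) (A ∪ Q) | #(J ∩ Q) = 1} = #Q * (#A).choose k := by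
  rw [← card_powersetCard, ← card_product]
  symm
  refine card_nbij (fun p => insert p.1 p.2) ?_ ?_ ?_
  · rintro ⟨q, B⟩ hqB
    simp only [coe_product, Set.mem_prod, mem_coe, mem_powersetCard] at hqB
    obtain ⟨hq, hBA, hB⟩ := hqB
    have hqB : q ∉ B := fun hqB => disjoint_left.1 h (hBA hqB) hq
    simp only [coe_filter, mem_powersetCard, Set.mem_ofPred_eq]
    refine ⟨⟨insert_subset (mem_union_right _ hq) (hBA.trans subset_union_left), ?_⟩, ?_⟩
    · rw [card_insert_of_notMem hqB, hB]
    · rw [(insert_inter_eq_singleton_and_insert_sdiff_eq h hq hBA).1, card_singleton]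
  · rintro ⟨q, B⟩ hqB ⟨q', B'⟩ hqB' heq
    simp only [coe_product, Set.mem_prod, mem_coe, mem_powersetCard] at hqB hqB'
    obtain ⟨h1, h2⟩ := insert_inter_eq_singleton_and_insert_sdiff_eq h hqB.1 hqB.2.1
    obtain ⟨h1', h2'⟩ := insert_inter_eq_singleton_and_insert_sdiff_eq h hqB'.1 hqB'.2.1
    simp only at heq
    rw [heq] at h1 h2
    exact Prod.ext (singleton_injective (h1.symm.trans h1')) (h2.symm.trans h2')
  · intro J hJ
    simp only [coe_filter, mem_powersetCard, Set.mem_ofPred_eq, card_eq_one] at hJ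
    obtain ⟨⟨hJ, hcard⟩, q, hq⟩ := hJ
    obtain ⟨hqJ, hqQ⟩ := mem_inter.1 (hq ▸ mem_singleton_self q)
    have hJA : J \ Q ⊆ A := fun x hx =>
      (mem_union.1 (hJ (mem_sdiff.1 hx).1)).resolve_right (mem_sdiff.1 hx).2
    refine ⟨(q, J \ Q), ?_, ?_⟩
    · simp only [coe_product, Set.mem_prod, mem_coe, mem_powersetCard]
      refine ⟨hqQ, hJA, ?_⟩
      rw [card_sdiff, inter_comm, hq, card_singleton, hcard]; rfl
    · simp only
      rw [← sdiff_inter_self_left, hq, sdiff_singleton_eq_erase, insert_erase hqJ]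

theorem card_filter_card_inter_le_one_powersetCard_union (h : Disjoint A Q) (k : ℕ) :
    #{J ∈ powersetCard (k + 1) (A ∪ Q) | #(J ∩ Q) ≤ 1} =
      (#A).choose (k + 1) + #Q * (#A).choose k := by
  have hsplit : {J ∈ powersetCard (k + 1) (A ∪ Q) | #(J ∩ Q) ≤ 1} =
      {J ∈ powersetCard (k + 1) (A ∪ Q) | #(J ∩ Q) = 0} ∪
        {J ∈ powersetCard (k + 1) (A ∪ Q) | #(J ∩ Q) = 1} := by
    rw [← filter_or]; congr! 2; omega
  rw [hsplit, card_union_of_disjoint (disjoint_filter.2 fun _ _ h0 h1 => by omega),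
    filter_card_inter_eq_zero_powersetCard_union h, card_powersetCard,
    card_filter_card_inter_eq_one_powersetCard_union h]

end

theorem sdotSet_eq_filter_card_inter_le_one {n : ℕ} {ℓ : ℕ → ℝ} (hn : 5 ≤ n)
    (hpos : LengthVec n ℓ) (hord : OrderedVec n ℓ) (hlong : Long n ℓ {n - 4, n - 3, n - 2})
    (k : ℕ) :
    SdotSet n ℓ k = ↑{J ∈ powersetCard k (Icc 1 (n - 1)) | #(J ∩ Icc (n - 4) (n - 1)) ≤ 1} := by
  ext J
  simp only [SdotSet, coe_filter, mem_powersetCard, Set.mem_ofPred_eq, and_assoc]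
  refine and_congr_right fun hJ => and_congr_right fun _ => ?_
  exact short_insert_iff_card_inter_le_one hn hpos hord hlong hJ

theorem sdot_cards_low_type_general (n : ℕ) (ℓ : ℕ → ℝ) (hn : 5 ≤ n)
    (hpos : LengthVec n ℓ) (hord : OrderedVec n ℓ)
    (hT : IsType n ℓ {n-4, n-3, n-2}) :
    (SdotSet n ℓ 1).ncard = n-1 ∧
    (SdotSet n ℓ 2).ncard = Nat.choose (n-5) 2 + 4*(n-5) ∧
    (SdotSet n ℓ (n-5)).ncard = 4*(n-5) + 1 ∧
    (SdotSet n ℓ (n-4)).ncard = 4 := by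
  have hsdot := sdotSet_eq_filter_card_inter_le_one hn hpos hord hT.2.2.1
  have hdisj : Disjoint (Icc 1 (n - 5)) (Icc (n - 4) (n - 1)) :=
    disjoint_left.2 fun x hx hx' => by simp only [mem_Icc] at hx hx'; omega
  have hcard : ∀ k,
      (SdotSet n ℓ (k + 1)).ncard = (n - 5).choose (k + 1) + 4 * (n - 5).choose k := by
    intro k
    rw [hsdot, Set.ncard_coe_finset, Icc_one_pred_eq_union hn,
      card_filter_card_inter_le_one_powersetCard_union hdisj, Nat.card_Icc, Nat.card_Icc,
      show n - 1 + 1 - (n - 4) = 4 by omega, Nat.add_sub_cancel]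
  refine ⟨?_, ?_, ?_, ?_⟩
  · rw [hcard 0, Nat.choose_one_right, Nat.choose_zero_right]; omega
  · rw [hcard 1, Nat.choose_one_right]
  · cases h : n - 5 with
    | zero => simp [hsdot, powersetCard_zero, filter_singleton]
    | succ k => rw [hcard k, h, Nat.choose_self, Nat.choose_succ_self_right]; ring
  · rw [show n - 4 = n - 5 + 1 by omega, hcard, Nat.choose_succ_self, Nat.choose_self]

/-- Cardinalities of Ṡ_k for an ordered special length vector of
type {n−4,n−3,n−2}. -/
theorem sdot_cards_low_type (n : ℕ) (ℓ : ℕ → ℝ) (hn : 5 ≤ n)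
    (hpos : LengthVec n ℓ) (hord : OrderedVec n ℓ) (hgen : Generic n ℓ)
    (hspec : SpecialVec n ℓ) (hT : IsType n ℓ {n-4, n-3, n-2}) :
    (SdotSet n ℓ 1).ncard = n-1 ∧
    (SdotSet n ℓ 2).ncard = Nat.choose (n-5) 2 + 4*(n-5) ∧
    (SdotSet n ℓ (n-5)).ncard = 4*(n-5) + 1 ∧
    (SdotSet n ℓ (n-4)).ncard = 4 :=
  sdot_cards_low_type_general n ℓ hn hpos hord hT
end

section
/- Let ℓ = (ℓ₁,…,ℓₙ) be an ordered generic length vector and ε > 0 sufficiently small. Then a subset J ⊆ {1,…,n+1} is short with respect to ℓ' = (ε, ℓ₁,…,ℓₙ) if and only if s(J − {1}) is short with respect to ℓ, where s(i) = i−1. More precisely, this holds whenever 2ε < min over subsets K ⊆ {1,…,n} of |∑_{j∈K} ℓⱼ − ∑_{j∉K} ℓⱼ|. -/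
/-!
Splitting off the entry `ε` and shifting indices down, both sides of the equivalence compare
`∑_K ℓ` with `∑_{Kᶜ} ℓ` for `K = s(J − {1})`; on the left one of the two sums is enlarged by `ε`.
Since the two sums differ by more than `2ε`, adding `ε` to either of them does not change which one
is smaller.
-/

open Finset

/-- `ℓ' = (ε, ℓ₁, …, ℓₙ)`. -/
def prepend (ε : ℝ) (ℓ : ℕ → ℝ) : ℕ → ℝ := fun j => if j = 1 then ε else ℓ (j - 1)

/-- `s(J − {1})` with `s(i) = i − 1`. -/
def shiftDown (J : Finset ℕ) : Finset ℕ := (J.erase 1).image (fun i => i - 1)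

lemma mem_shiftDown {J : Finset ℕ} {a : ℕ} (ha : 1 ≤ a) : a ∈ shiftDown J ↔ a + 1 ∈ J := by
  simp only [shiftDown, mem_image, mem_erase]
  constructor
  · rintro ⟨b, ⟨hb1, hbJ⟩, rfl⟩
    rwa [Nat.sub_add_cancel (by omega)]
  · exact fun h => ⟨a + 1, ⟨by omega, h⟩, by omega⟩

lemma shiftDown_subset_Icc {n : ℕ} {J : Finset ℕ} (hJ : J ⊆ Icc 1 (n + 1)) :
    shiftDown J ⊆ Icc 1 n := by
  intro a ha
  obtain ⟨b, hb, rfl⟩ := mem_image.1 ha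
  have := mem_Icc.1 (hJ (mem_of_mem_erase hb))
  have := ne_of_mem_erase hb
  exact mem_Icc.2 ⟨by omega, by omega⟩

lemma shiftDown_Icc_sdiff (n : ℕ) (J : Finset ℕ) :
    shiftDown (Icc 1 (n + 1) \ J) = Icc 1 n \ shiftDown J := by
  ext a
  rcases Nat.eq_zero_or_pos a with rfl | ha
  · simp only [shiftDown, mem_sdiff, mem_image, mem_erase, mem_Icc]
    omega
  · simp only [mem_shiftDown ha, mem_sdiff, mem_Icc]
    constructor <;> rintro ⟨⟨_, _⟩, hJ⟩ <;> exact ⟨⟨by omega, by omega⟩, hJ⟩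

lemma sum_prepend (ε : ℝ) (ℓ : ℕ → ℝ) (S : Finset ℕ) :
    ∑ j ∈ S, prepend ε ℓ j = (if 1 ∈ S then ε else 0) + ∑ i ∈ shiftDown S, ℓ i := by
  have hinj : Set.InjOn (fun i => i - 1) (S.erase 1 : Set ℕ) := by
    intro a ha b hb hab
    have := ne_of_mem_erase ha
    have := ne_of_mem_erase hb
    simp only at hab
    omega
  have hrest : ∑ j ∈ S.erase 1, prepend ε ℓ j = ∑ i ∈ shiftDown S, ℓ i := by
    rw [shiftDown, sum_image hinj]
    exact sum_congr rfl fun j hj => if_neg (ne_of_mem_erase hj)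
  split_ifs with h1
  · rw [← add_sum_erase S _ h1, hrest]
    rfl
  · rw [← hrest, erase_eq_of_notMem h1, zero_add]

lemma add_lt_iff_lt_of_abs_lt_abs_sub {a b c : ℝ} (h : |c| < |a - b|) : a + c < b ↔ a < b := by
  constructor <;> intro <;> cases abs_cases c <;> cases abs_cases (a - b) <;> linarith

theorem prepend_small_short_iff_general (n : ℕ) (ℓ : ℕ → ℝ) (ε : ℝ)
    (hε : 0 < ε)
    (hεsmall : ∀ K ⊆ Finset.Icc 1 n,
      2*ε < |∑ j ∈ K, ℓ j - ∑ j ∈ Finset.Icc 1 n \ K, ℓ j|) :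
    ∀ J ⊆ Finset.Icc 1 (n+1),
      Short (n+1) (fun j => if j = 1 then ε else ℓ (j-1)) J ↔
        Short n ℓ ((J.erase 1).image (fun i => i - 1)) := by
  intro J hJ
  have hgap := hεsmall _ (shiftDown_subset_Icc hJ)
  have hε_abs : |ε| = ε := abs_of_pos hε
  change Short (n + 1) (prepend ε ℓ) J ↔ Short n ℓ (shiftDown J)
  unfold Short
  rw [sum_prepend, sum_prepend, shiftDown_Icc_sdiff]
  by_cases h1 : 1 ∈ J
  · have h1' : 1 ∉ Icc 1 (n + 1) \ J := fun h => (mem_sdiff.1 h).2 h1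
    rw [if_pos h1, if_neg h1', zero_add, add_comm]
    exact add_lt_iff_lt_of_abs_lt_abs_sub (by linarith)
  · have h1' : 1 ∈ Icc 1 (n + 1) \ J := mem_sdiff.2 ⟨by simp, h1⟩
    rw [if_neg h1, if_pos h1', zero_add, add_comm ε, ← sub_lt_iff_lt_add, sub_eq_add_neg]
    exact add_lt_iff_lt_of_abs_lt_abs_sub (by rw [abs_neg]; linarith)

/-- Prepending a sufficiently small ε to an ordered generic length
vector: J is short w.r.t. ℓ' = (ε,ℓ₁,…,ℓₙ) iff s(J − {1}) is short w.r.t. ℓ,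
where s(i) = i − 1. This holds whenever 2ε < |∑_K ℓ − ∑_{Kᶜ} ℓ| for all K. -/
theorem prepend_small_short_iff (n : ℕ) (ℓ : ℕ → ℝ) (ε : ℝ)
    (hpos : LengthVec n ℓ) (hord : OrderedVec n ℓ) (hgen : Generic n ℓ)
    (hε : 0 < ε)
    (hεsmall : ∀ K ⊆ Finset.Icc 1 n,
      2*ε < |∑ j ∈ K, ℓ j - ∑ j ∈ Finset.Icc 1 n \ K, ℓ j|) :
    ∀ J ⊆ Finset.Icc 1 (n+1),
      Short (n+1) (fun j => if j = 1 then ε else ℓ (j-1)) J ↔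
        Short n ℓ ((J.erase 1).image (fun i => i - 1)) :=
  prepend_small_short_iff_general n ℓ ε hε hεsmall
end

section
/- Let ℓ = (ℓ₁,…,ℓₙ) be ordered generic, let ℓ' = (ℓ₂,…,ℓ_{n−1}, ℓₙ+ℓ₁), and let ε > 0 be small enough that shortness with respect to ℓ_{ℓ₁−ε} = (ε, ℓ₂,…,ℓ_{n−1}, ℓₙ+ℓ₁−ε) agrees with shortness determined by ℓ'. Then Ṡ(ℓ_{ℓ₁−ε}) ⊆ Ṡ(ℓ), and the set difference Ṡ(ℓ) − Ṡ(ℓ_{ℓ₁−ε}) is in bijection with the set of subsets J ⊆ {2,…,n−1} such that J is short with respect to ℓ and J ∪ {1} is long with respect to ℓ (the bijection sending J to its complement {2,…,n−1} − J). -/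
open Finset

/-! After undoing the shift `j ↦ j - 1` that produces `ℓ' = (ℓ₂,…,ℓ_{n−1}, ℓₙ+ℓ₁)`, the
smallness of `ε` says: a set `K ∋ n` is short for `ℓ_{ℓ₁−ε}` iff `K ∪ {1}` is short for `ℓ`.
Adding `1` only makes a set longer, so `Ṡ(ℓ_{ℓ₁−ε}) ⊆ Ṡ(ℓ)`, and `J` lies in the difference iff
`1 ∉ J`, `J ∪ {n}` is short and `J ∪ {1, n}` is long for `ℓ`. Passing to complements in
`{1,…,n}` (and using genericity for the second condition), this says exactly that
`{1} ∪ ({2,…,n−1} − J)` is long and `{2,…,n−1} − J` is short. -/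

section

variable {n : ℕ} {f : ℕ → ℝ} {J K : Finset ℕ}

theorem short_iff_two_mul_sum_lt (hJ : J ⊆ Icc 1 n) :
    Short n f J ↔ 2 * ∑ j ∈ J, f j < ∑ j ∈ Icc 1 n, f j := by
  rw [Short, sum_sdiff_eq_sub hJ]
  constructor <;> intro <;> linarith

theorem Short.anti (h : Short n f J) (hKJ : K ⊆ J) (hf : ∀ i ∈ J \ K, 0 ≤ f i) :
    Short n f K := by
  have hf' : ∀ i ∈ J, i ∉ K → 0 ≤ f i := fun i hiJ hiK => hf i (mem_sdiff.2 ⟨hiJ, hiK⟩)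
  calc ∑ j ∈ K, f j ≤ ∑ j ∈ J, f j := sum_le_sum_of_subset_of_nonneg hKJ hf'
    _ < ∑ j ∈ Icc 1 n \ J, f j := h
    _ ≤ ∑ j ∈ Icc 1 n \ K, f j :=
      sum_le_sum_of_subset_of_nonneg (sdiff_subset_sdiff subset_rfl hKJ) fun i hi hi' =>
        hf' i (not_not.1 fun hiJ => hi' (mem_sdiff.2 ⟨(mem_sdiff.1 hi).1, hiJ⟩)) (mem_sdiff.1 hi).2

theorem long_sdiff_iff (hK : K ⊆ Icc 1 n) : Long n f (Icc 1 n \ K) ↔ Short n f K := by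
  rw [Long, Finset.sdiff_sdiff_eq_self hK]

theorem Generic.not_short_iff (hgen : Generic n f) (hK : K ⊆ Icc 1 n) :
    ¬ Short n f K ↔ Short n f (Icc 1 n \ K) := by
  rw [Short, Short, Finset.sdiff_sdiff_eq_self hK, not_lt]
  exact (hgen K hK).symm.le_iff_lt

end

section Shift

variable {n : ℕ} (ℓ : ℕ → ℝ) {K : Finset ℕ}

theorem sum_image_pred_erase_one (hn : 2 ≤ n) (hK : K ⊆ Icc 1 n) (hnK : n ∈ K) :
    ∑ j ∈ (K.erase 1).image (fun i => i - 1), (if j = n - 1 then ℓ n + ℓ 1 else ℓ (j + 1)) =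
      ∑ j ∈ insert 1 K, ℓ j := by
  have hK' : ∀ i ∈ K.erase 1, 2 ≤ i := fun i hi => by
    have := mem_Icc.1 (hK (mem_of_mem_erase hi)); have := ne_of_mem_erase hi; omega
  have hshift : ∀ i ∈ K.erase 1,
      (if i - 1 = n - 1 then ℓ n + ℓ 1 else ℓ (i - 1 + 1)) = ℓ i + if n = i then ℓ 1 else 0 :=
    fun i hi => by
      have := hK' i hi
      by_cases hin : n = i
      · subst hin; simp
      · simp [show i - 1 ≠ n - 1 by omega, hin, show i - 1 + 1 = i by omega]
  rw [sum_image fun x hx y hy h => by have := hK' x hx; have := hK' y hy; omega,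
    sum_congr rfl hshift, sum_add_distrib, sum_ite_eq, if_pos (mem_erase.2 ⟨by omega, hnK⟩),
    ← add_sum_erase _ _ (mem_insert_self 1 K), erase_insert_eq_erase, add_comm]

theorem short_shift_iff (hn : 2 ≤ n) (hK : K ⊆ Icc 1 n) (hnK : n ∈ K) :
    Short (n - 1) (fun j => if j = n - 1 then ℓ n + ℓ 1 else ℓ (j + 1))
        ((K.erase 1).image (fun i => i - 1)) ↔ Short n ℓ (insert 1 K) := by
  have hIcc : ((Icc 1 n).erase 1).image (fun i => i - 1) = Icc 1 (n - 1) := by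
    ext j
    simp only [mem_image, mem_erase, mem_Icc]
    exact ⟨by rintro ⟨i, hi, rfl⟩; omega, fun hj => ⟨j + 1, by omega, by omega⟩⟩
  have h1n : 1 ∈ Icc 1 n := mem_Icc.2 ⟨le_rfl, by omega⟩
  have htotal := sum_image_pred_erase_one ℓ hn subset_rfl (mem_Icc.2 ⟨by omega, le_rfl⟩)
  rw [hIcc, insert_eq_of_mem h1n] at htotal
  have himage : (K.erase 1).image (fun i => i - 1) ⊆ Icc 1 (n - 1) :=
    hIcc ▸ image_subset_image (erase_subset_erase 1 hK)
  rw [short_iff_two_mul_sum_lt himage, short_iff_two_mul_sum_lt (insert_subset h1n hK), htotal,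
    sum_image_pred_erase_one ℓ hn hK hnK]

end Shift

theorem Icc_sdiff_insert_one_insert {n : ℕ} (J : Finset ℕ) :
    Icc 1 n \ insert 1 (insert n J) = Icc 2 (n - 1) \ J := by
  ext j
  simp only [mem_sdiff, mem_insert, mem_Icc]
  grind

theorem insert_one_Icc_two_sdiff {n : ℕ} {J : Finset ℕ} (hn : 2 ≤ n) (hJ : J ⊆ Icc 2 (n - 1)) :
    insert 1 (Icc 2 (n - 1) \ J) = Icc 1 n \ insert n J := by
  ext j
  have := fun hj => mem_Icc.1 (hJ (x := j) hj)
  simp only [mem_sdiff, mem_insert, mem_Icc]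
  grind

theorem sdot_difference_general (n : ℕ) (ℓ : ℕ → ℝ) (hn : 4 ≤ n)
    (hpos : LengthVec n ℓ) (hgen : Generic n ℓ)
    -- L is the length vector ℓ_{ℓ₁−ε}
    (L : ℕ → ℝ)
    -- ε is small enough: shortness w.r.t. L agrees with shortness determined by
    -- ℓ' = (ℓ₂,…,ℓ_{n−1},ℓₙ+ℓ₁)
    (hεsmall : ∀ J ⊆ Finset.Icc 1 n, Short n L J ↔
      Short (n-1)
        (fun j => if j = n-1 then ℓ n + ℓ 1 else ℓ (j+1))
        ((J.erase 1).image (fun i => i - 1))) :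
    Sdot n L ⊆ Sdot n ℓ ∧
    (∀ J ⊆ Finset.Icc 1 (n-1),
      ((Short n ℓ (insert n J) ∧ ¬ Short n L (insert n J)) ↔
        (J ⊆ Finset.Icc 2 (n-1) ∧ Short n ℓ (Finset.Icc 2 (n-1) \ J) ∧
          Long n ℓ (insert 1 (Finset.Icc 2 (n-1) \ J))))) := by
  have hsub : ∀ J ⊆ Icc 1 (n - 1), insert n J ⊆ Icc 1 n := fun J hJ =>
    insert_subset (mem_Icc.2 ⟨by omega, le_rfl⟩) (hJ.trans (Icc_subset_Icc le_rfl (by omega)))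
  have key : ∀ J ⊆ Icc 1 (n - 1), Short n L (insert n J) ↔ Short n ℓ (insert 1 (insert n J)) :=
    fun J hJ => (hεsmall _ (hsub J hJ)).trans
      (short_shift_iff ℓ (by omega) (hsub J hJ) (mem_insert_self n J))
  refine ⟨fun J ⟨hJ, hshort⟩ => ⟨hJ, ((key J hJ).1 hshort).anti (subset_insert _ _) ?_⟩,
    fun J hJ => ?_⟩
  · intro i hi
    obtain ⟨hi, hiJ⟩ := mem_sdiff.1 hi
    obtain rfl := (mem_insert.1 hi).resolve_right hiJ
    exact (hpos 1 (mem_Icc.2 ⟨le_rfl, by omega⟩)).le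
  by_cases h1 : 1 ∈ J
  · have hJ2 : ¬ J ⊆ Icc 2 (n - 1) := fun h => by simpa using h h1
    rw [key J hJ, insert_eq_of_mem (mem_insert_of_mem h1)]
    tauto
  · have hJ2 : J ⊆ Icc 2 (n - 1) := fun j hj => by
      have := mem_Icc.1 (hJ hj); have := ne_of_mem_of_not_mem hj h1
      exact mem_Icc.2 ⟨by omega, by omega⟩
    rw [key J hJ, hgen.not_short_iff (insert_subset (mem_Icc.2 ⟨le_rfl, by omega⟩) (hsub J hJ)),
      Icc_sdiff_insert_one_insert, insert_one_Icc_two_sdiff (by omega) hJ2,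
      long_sdiff_iff (hsub J hJ)]
    tauto

/-- With ℓ_{ℓ₁−ε} = (ε, ℓ₂,…,ℓ_{n−1}, ℓₙ+ℓ₁−ε), one has
Ṡ(ℓ_{ℓ₁−ε}) ⊆ Ṡ(ℓ), and Ṡ(ℓ) − Ṡ(ℓ_{ℓ₁−ε}) is in bijection (via complement in
{2,…,n−1}) with the subsets J ⊆ {2,…,n−1} short w.r.t. ℓ with J ∪ {1} long. -/
theorem sdot_difference (n : ℕ) (ℓ : ℕ → ℝ) (ε : ℝ) (hn : 4 ≤ n)
    (hpos : LengthVec n ℓ) (hord : OrderedVec n ℓ) (hgen : Generic n ℓ)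
    (hε0 : 0 < ε) (hε1 : 2*ε < ℓ 1)
    -- L is the length vector ℓ_{ℓ₁−ε}
    (L : ℕ → ℝ)
    (hL : L = fun j => if j = 1 then ε else if j = n then ℓ n + ℓ 1 - ε else ℓ j)
    -- ε is small enough: shortness w.r.t. L agrees with shortness determined by
    -- ℓ' = (ℓ₂,…,ℓ_{n−1},ℓₙ+ℓ₁)
    (hεsmall : ∀ J ⊆ Finset.Icc 1 n, Short n L J ↔
      Short (n-1)
        (fun j => if j = n-1 then ℓ n + ℓ 1 else ℓ (j+1))
        ((J.erase 1).image (fun i => i - 1))) :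
    Sdot n L ⊆ Sdot n ℓ ∧
    (∀ J ⊆ Finset.Icc 1 (n-1),
      ((Short n ℓ (insert n J) ∧ ¬ Short n L (insert n J)) ↔
        (J ⊆ Finset.Icc 2 (n-1) ∧ Short n ℓ (Finset.Icc 2 (n-1) \ J) ∧
          Long n ℓ (insert 1 (Finset.Icc 2 (n-1) \ J))))) :=
  sdot_difference_general n ℓ hn hpos hgen L hεsmall
end
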